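/- arXiv:1807.10094 — 4 statements merged into one kernel-verified Lean document; each statement's English description precedes it below -/
import Mathlib

section
/- Let p, a be trigonometric polynomials and suppose b_1,...,b_{J_a} satisfy the UEP identities with a (i.e. a(ω)conj(a(ω)) + Σ_j b_j(ω)conj(b_j(ω)) = 1 and a(ω)conj(a(ω−1/2)) + Σ_j b_j(ω)conj(b_j(ω−1/2)) = 0 for all ω), and q_1,...,q_{J_p} satisfy the UEP identities with p. Then the collection of products {p·b_j}, {a·q_j}, {q_j·b_k} satisfies the UEP identities with the product symbol a·p. -/
open ComplexConjugate Finset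

theorem mul_add_sum_mul_mul_add_sum_mul {R ι κ : Type*} [CommSemiring R] [Fintype ι] [Fintype κ]
    (A A' P P' : R) (B B' : ι → R) (Q Q' : κ → R) :
    (A * P) * (A' * P')
      + ((∑ i, (P * B i) * (P' * B' i))
        + (∑ k, (A * Q k) * (A' * Q' k))
        + ∑ k, ∑ i, (Q k * B i) * (Q' k * B' i))
    = (A * A' + ∑ i, B i * B' i) * (P * P' + ∑ k, Q k * Q' k) := by
  have hPB : ∑ i, (P * B i) * (P' * B' i) = (P * P') * ∑ i, B i * B' i := by
    rw [mul_sum]; exact sum_congr rfl fun i _ => by ring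
  have hAQ : ∑ k, (A * Q k) * (A' * Q' k) = (A * A') * ∑ k, Q k * Q' k := by
    rw [mul_sum]; exact sum_congr rfl fun k _ => by ring
  have hQB : ∑ k, ∑ i, (Q k * B i) * (Q' k * B' i) = (∑ k, Q k * Q' k) * ∑ i, B i * B' i := by
    rw [sum_mul_sum]; exact sum_congr rfl fun k _ => sum_congr rfl fun i _ => by ring
  rw [hPB, hAQ, hQB]
  ring

/-- UEP identities are preserved under products of symbols:
if `a` satisfies the UEP identities with framelets `b j` and `p` with `q j`,
then `a*p` satisfies them with the family `{p*b j} ∪ {a*q j} ∪ {q j * b k}`. -/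
theorem uep_product (Ja Jp : ℕ) (p a : ℝ → ℂ) (b : Fin Ja → ℝ → ℂ) (q : Fin Jp → ℝ → ℂ)
    (ha1 : ∀ ω : ℝ, a ω * conj (a ω) + ∑ j, b j ω * conj (b j ω) = 1)
    (ha2 : ∀ ω : ℝ, a ω * conj (a (ω - 1/2)) + ∑ j, b j ω * conj (b j (ω - 1/2)) = 0)
    (hp1 : ∀ ω : ℝ, p ω * conj (p ω) + ∑ j, q j ω * conj (q j ω) = 1)
    (hp2 : ∀ ω : ℝ, p ω * conj (p (ω - 1/2)) + ∑ j, q j ω * conj (q j (ω - 1/2)) = 0) :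
    (∀ ω : ℝ,
      (a ω * p ω) * conj (a ω * p ω)
        + ((∑ j, (p ω * b j ω) * conj (p ω * b j ω))
          + (∑ j, (a ω * q j ω) * conj (a ω * q j ω))
          + ∑ j, ∑ k, (q j ω * b k ω) * conj (q j ω * b k ω)) = 1)
    ∧ (∀ ω : ℝ,
      (a ω * p ω) * conj (a (ω - 1/2) * p (ω - 1/2))
        + ((∑ j, (p ω * b j ω) * conj (p (ω - 1/2) * b j (ω - 1/2)))
          + (∑ j, (a ω * q j ω) * conj (a (ω - 1/2) * q j (ω - 1/2)))
          + ∑ j, ∑ k, (q j ω * b k ω) * conj (q j (ω - 1/2) * b k (ω - 1/2))) = 0) := by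
  refine ⟨fun ω => ?_, fun ω => ?_⟩ <;> simp only [map_mul]
  · rw [mul_add_sum_mul_mul_add_sum_mul, ha1, hp1, one_mul]
  · rw [mul_add_sum_mul_mul_add_sum_mul, ha2, hp2, zero_mul]
end

section
/- Let d be a trigonometric polynomial with real coefficients satisfying |d(ω)|² + |d(ω−1/2)|² = 1 for all ω, and set q_d(ω) = e^{−i2π(2n−1)ω}·conj(d(ω−1/2)). Then p = d·conj(d), q_1(ω) = √2·e^{i2π(2n−1)ω}·d(ω)·d(ω−1/2) and q_2(ω) = d(ω−1/2)·conj(d(ω−1/2)) satisfy the UEP identities: |p(ω)|² + |q_1(ω)|² + |q_2(ω)|² = 1 and p(ω)conj(p(ω−1/2)) + q_1(ω)conj(q_1(ω−1/2)) + q_2(ω)conj(q_2(ω−1/2)) = 0 for all ω ∈ [0,1). -/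
open ComplexConjugate Finset Real

/-!
Write `a = |d(ω)|²`, `b = |d(ω - 1/2)|²`. Since `|√2 e^{i2π(2n-1)ω}|² = 2`, the first identity
reads `a² + 2ab + b² = (a + b)² = 1`. In the second, `d(ω - 1) = d(ω)` by 1-periodicity and the
phases combine to `e^{iπ(2n-1)} = -1`, so the middle term is `-2ab` and cancels `ab + ba`.
-/

section StarAlgebra

variable {R : Type*} [CommRing R] [StarRing R]

theorem uep_norm_identity {x y e s : R} (hxy : x * conj x + y * conj y = 1)
    (he : e * conj e = 1) (hs : s * conj s = 2) :
    (x * conj x) * conj (x * conj x) + (s * e * x * y) * conj (s * e * x * y)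
      + (y * conj y) * conj (y * conj y) = 1 := by
  simp only [map_mul, starRingEnd_self_apply]
  linear_combination (x * conj x + y * conj y + 1) * hxy
    + 2 * (x * conj x) * (y * conj y) * he + e * conj e * (x * conj x) * (y * conj y) * hs

theorem uep_orthogonality {x y e e' s : R} (he : e * conj e' = -1) (hs : s * conj s = 2) :
    (x * conj x) * conj (y * conj y) + (s * e * x * y) * conj (s * e' * y * x)
      + (y * conj y) * conj (x * conj x) = 0 := by
  simp only [map_mul, starRingEnd_self_apply]
  linear_combination s * conj s * (x * conj x) * (y * conj y) * he
    - (x * conj x) * (y * conj y) * hs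

end StarAlgebra

namespace Complex

theorem exp_two_pi_I_int_periodic (k : ℤ) :
    Function.Periodic (fun ω : ℝ => exp (2 * π * I * k * ω)) 1 := fun ω => by
  simp only [ofReal_add, ofReal_one, mul_add, mul_one, exp_add]
  rw [mul_comm (2 * π * I) (k : ℂ), exp_int_mul_two_pi_mul_I, mul_one]

theorem trigPolynomial_periodic (s : Finset ℤ) (a : ℤ → ℂ) :
    Function.Periodic (fun ω : ℝ => ∑ k ∈ s, a k * exp (2 * π * I * k * ω)) 1 :=
  fun ω => Finset.sum_congr rfl fun k _ => congrArg (a k * ·) (exp_two_pi_I_int_periodic k ω)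

theorem exp_two_pi_I_mul_conj (m : ℤ) (x y : ℝ) :
    exp (2 * π * I * m * x) * conj (exp (2 * π * I * m * y)) =
      exp (2 * π * I * m * (x - y : ℝ)) := by
  rw [← exp_conj, ← exp_add]
  congr 1
  simp only [map_mul, map_ofNat, conj_ofReal, conj_I, map_intCast]
  push_cast
  ring

theorem exp_two_pi_I_odd_mul_half {m : ℤ} (hm : Odd m) :
    exp (2 * π * I * m * (1 / 2 : ℝ)) = -1 := by
  rw [show 2 * π * I * m * ((1 / 2 : ℝ) : ℂ) = m * (π * I) by push_cast; ring,
    exp_int_mul, exp_pi_mul_I, hm.neg_one_zpow]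

end Complex

theorem dd_uep_general (n : ℕ) (c : ℤ → ℝ) (d : ℝ → ℂ)
    (hd : ∀ ω : ℝ, d ω = (1/2 : ℂ) * ∑ k ∈ Finset.Icc (1 - 2*(n:ℤ)) 0,
      (c k : ℂ) * Complex.exp (2 * (Real.pi : ℂ) * Complex.I * (k : ℂ) * (ω : ℂ)))
    (hQMF : ∀ ω : ℝ, d ω * conj (d ω) + d (ω - 1/2) * conj (d (ω - 1/2)) = 1) :
    (∀ ω : ℝ,
      (d ω * conj (d ω)) * conj (d ω * conj (d ω))
      + ((Real.sqrt 2 : ℂ) * Complex.exp (2 * (Real.pi : ℂ) * Complex.I * (2*(n:ℂ) - 1) * (ω : ℂ))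
            * d ω * d (ω - 1/2))
        * conj ((Real.sqrt 2 : ℂ)
            * Complex.exp (2 * (Real.pi : ℂ) * Complex.I * (2*(n:ℂ) - 1) * (ω : ℂ))
            * d ω * d (ω - 1/2))
      + (d (ω - 1/2) * conj (d (ω - 1/2))) * conj (d (ω - 1/2) * conj (d (ω - 1/2))) = 1)
    ∧ (∀ ω : ℝ,
      (d ω * conj (d ω)) * conj (d (ω - 1/2) * conj (d (ω - 1/2)))
      + ((Real.sqrt 2 : ℂ) * Complex.exp (2 * (Real.pi : ℂ) * Complex.I * (2*(n:ℂ) - 1) * (ω : ℂ))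
            * d ω * d (ω - 1/2))
        * conj ((Real.sqrt 2 : ℂ)
            * Complex.exp (2 * (Real.pi : ℂ) * Complex.I * (2*(n:ℂ) - 1) * ((ω : ℂ) - 1/2))
            * d (ω - 1/2) * d (ω - 1))
      + (d (ω - 1/2) * conj (d (ω - 1/2))) * conj (d (ω - 1) * conj (d (ω - 1))) = 0) := by
  have hsqrt : (Real.sqrt 2 : ℂ) * conj (Real.sqrt 2 : ℂ) = 2 := by
    rw [Complex.conj_ofReal, ← Complex.ofReal_mul, Real.mul_self_sqrt zero_le_two,
      Complex.ofReal_ofNat]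
  have hper (ω : ℝ) : d (ω - 1) = d ω := by
    rw [hd, hd, (Complex.trigPolynomial_periodic _ _).sub_eq ω]
  have hm : (2 * (n : ℂ) - 1) = ((2 * n - 1 : ℤ) : ℂ) := by push_cast; ring
  have hodd : Odd (2 * (n : ℤ) - 1) := ⟨(n : ℤ) - 1, by ring⟩
  refine ⟨fun ω => uep_norm_identity (hQMF ω) ?_ hsqrt, fun ω => ?_⟩
  · rw [hm, Complex.exp_two_pi_I_mul_conj, sub_self, Complex.ofReal_zero, mul_zero,
      Complex.exp_zero]
  · rw [hper]
    refine uep_orthogonality ?_ hsqrt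
    rw [hm, show (ω : ℂ) - 1 / 2 = ((ω - 1 / 2 : ℝ) : ℂ) by push_cast; ring,
      Complex.exp_two_pi_I_mul_conj, sub_sub_cancel, Complex.exp_two_pi_I_odd_mul_half hodd]

/-- For a trigonometric polynomial `d` with real coefficients supported on `{1-2n,…,0}`
satisfying `|d(ω)|² + |d(ω-1/2)|² = 1`, the symbols
`p = d·conj d`, `q₁(ω) = √2 e^{i2π(2n-1)ω} d(ω) d(ω-1/2)` and
`q₂(ω) = d(ω-1/2)·conj(d(ω-1/2))` satisfy the UEP identities. -/
theorem dd_uep (n : ℕ) (hn : 0 < n) (c : ℤ → ℝ) (d : ℝ → ℂ)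
    (hd : ∀ ω : ℝ, d ω = (1/2 : ℂ) * ∑ k ∈ Finset.Icc (1 - 2*(n:ℤ)) 0,
      (c k : ℂ) * Complex.exp (2 * (Real.pi : ℂ) * Complex.I * (k : ℂ) * (ω : ℂ)))
    (hQMF : ∀ ω : ℝ, d ω * conj (d ω) + d (ω - 1/2) * conj (d (ω - 1/2)) = 1) :
    (∀ ω : ℝ,
      (d ω * conj (d ω)) * conj (d ω * conj (d ω))
      + ((Real.sqrt 2 : ℂ) * Complex.exp (2 * (Real.pi : ℂ) * Complex.I * (2*(n:ℂ) - 1) * (ω : ℂ))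
            * d ω * d (ω - 1/2))
        * conj ((Real.sqrt 2 : ℂ)
            * Complex.exp (2 * (Real.pi : ℂ) * Complex.I * (2*(n:ℂ) - 1) * (ω : ℂ))
            * d ω * d (ω - 1/2))
      + (d (ω - 1/2) * conj (d (ω - 1/2))) * conj (d (ω - 1/2) * conj (d (ω - 1/2))) = 1)
    ∧ (∀ ω : ℝ,
      (d ω * conj (d ω)) * conj (d (ω - 1/2) * conj (d (ω - 1/2)))
      + ((Real.sqrt 2 : ℂ) * Complex.exp (2 * (Real.pi : ℂ) * Complex.I * (2*(n:ℂ) - 1) * (ω : ℂ))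
            * d ω * d (ω - 1/2))
        * conj ((Real.sqrt 2 : ℂ)
            * Complex.exp (2 * (Real.pi : ℂ) * Complex.I * (2*(n:ℂ) - 1) * ((ω : ℂ) - 1/2))
            * d (ω - 1/2) * d (ω - 1))
      + (d (ω - 1/2) * conj (d (ω - 1/2))) * conj (d (ω - 1) * conj (d (ω - 1))) = 0) :=
  dd_uep_general n c d hd hQMF
end

section
/- Let P̃ be a square matrix with P̃·𝟏 = 𝟏, δ^T·P̃ = δ^T for the standard basis vector δ at index 0, P̃(0,0) = 1 being the only nonzero entry in row 0, and suppose every eigenvalue λ ≠ 1 of P̃ satisfies |λ| < 1, with 1 a simple eigenvalue. Then for every canonical basis vector δ_k, P̃^j δ_k converges to δ_k(0)·𝟏 as j → ∞. -/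
/-!
Deleting row and column `0` leaves a matrix `Q`, and since row `0` of `P̃` is `δᵀ` the
characteristic polynomial factors as `(X - 1) · χ_Q`. Hence every eigenvalue of `Q` is an
eigenvalue of `P̃`, and simplicity of the eigenvalue `1` excludes it from `Q`; so the spectral
radius of `Q` is `< 1` and `Qʲ → 0` by Gelfand's formula. The hyperplane `{w | w 0 = 0}` is
invariant under `P̃`, which acts there as `Q`, so writing `δ_k = (δ_k - δ_k(0) 𝟏) + δ_k(0) 𝟏`
and using `P̃ 𝟏 = 𝟏` gives `P̃ʲ δ_k → δ_k(0) 𝟏`.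
-/

open Filter Topology Polynomial

theorem Polynomial.not_isRoot_of_rootMultiplicity_X_sub_C_mul_eq_one {R : Type*} [CommRing R]
    [IsDomain R] {p : R[X]} {a : R} (h : ((X - C a) * p).rootMultiplicity a = 1) :
    ¬ p.IsRoot a := by
  intro hroot
  have hp : p ≠ 0 := by
    rintro rfl
    simp at h
  rw [rootMultiplicity_mul (mul_ne_zero (X_sub_C_ne_zero a) hp),
    rootMultiplicity_X_sub_C_self] at h
  exact ((rootMultiplicity_pos hp).mpr hroot).ne' (by omega)

theorem tendsto_pow_atTop_nhds_zero_of_forall_mem_spectrum {A : Type*} [NormedRing A]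
    [NormedAlgebra ℂ A] [CompleteSpace A] {a : A} (h : ∀ z ∈ spectrum ℂ a, ‖z‖ < 1) :
    Tendsto (fun n : ℕ => a ^ n) atTop (𝓝 0) := by
  cases subsingleton_or_nontrivial A
  · simp only [Subsingleton.elim _ (0 : A), tendsto_const_nhds]
  have hρ : spectralRadius ℂ a < 1 := by
    exact_mod_cast spectrum.spectralRadius_lt_of_forall_lt a (r := 1)
      fun z hz => by simpa [← NNReal.coe_lt_coe] using h z hz
  obtain ⟨r, hρr, hr1⟩ := ENNReal.lt_iff_exists_nnreal_btwn.mp hρ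
  have hbound : ∀ᶠ n : ℕ in atTop, ‖a ^ n‖₊ ≤ r ^ n := by
    filter_upwards [(spectrum.pow_nnnorm_pow_one_div_tendsto_nhds_spectralRadius a).eventually_lt_const
      hρr, eventually_ne_atTop 0] with n hn hn0
    have := ENNReal.rpow_le_rpow hn.le (by positivity : (0 : ℝ) ≤ n)
    rw [← ENNReal.rpow_mul, one_div_mul_cancel (by exact_mod_cast hn0), ENNReal.rpow_one,
      ENNReal.rpow_natCast] at this
    exact_mod_cast this
  refine squeeze_zero_norm' ?_
    (tendsto_pow_atTop_nhds_zero_of_lt_one r.coe_nonneg (by exact_mod_cast hr1))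
  filter_upwards [hbound] with n hn
  exact_mod_cast hn

namespace Matrix

variable {n R : Type*}

def deleteRowCol (A : Matrix n n R) (i : n) : Matrix {j // j ≠ i} {j // j ≠ i} R :=
  A.submatrix Subtype.val Subtype.val

@[simp]
theorem deleteRowCol_apply (A : Matrix n n R) (i : n) (a b : {j // j ≠ i}) :
    A.deleteRowCol i a b = A a b :=
  rfl

variable [Fintype n] [DecidableEq n]

theorem pow_mulVec_eq_self [Semiring R] {A : Matrix n n R} {v : n → R} (h : A *ᵥ v = v)
    (k : ℕ) : A ^ k *ᵥ v = v := by
  induction k with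
  | zero => simp
  | succ k ih => rw [pow_succ, ← mulVec_mulVec, h, ih]

theorem exists_mulVec_eq_smul_of_mem_spectrum {K : Type*} [Field K] {A : Matrix n n K} {μ : K}
    (h : μ ∈ spectrum K A) : ∃ v ≠ 0, A *ᵥ v = μ • v := by
  rw [← spectrum_toLin', ← Module.End.hasEigenvalue_iff_mem_spectrum] at h
  obtain ⟨v, hv⟩ := h.exists_hasEigenvector
  exact ⟨v, hv.2, by simpa using hv.apply_eq_smul⟩

theorem tendsto_pow_atTop_nhds_zero_of_forall_mem_spectrum (A : Matrix n n ℂ)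
    (h : ∀ μ ∈ spectrum ℂ A, ‖μ‖ < 1) : Tendsto (fun k : ℕ => A ^ k) atTop (𝓝 0) :=
  -- the `L^∞` operator norm induces the product topology in which the claim is stated
  let _ := Matrix.linftyOpNormedRing (n := n) (α := ℂ)
  let _ := Matrix.linftyOpNormedAlgebra (n := n) (R := ℂ) (α := ℂ)
  _root_.tendsto_pow_atTop_nhds_zero_of_forall_mem_spectrum h

theorem tendsto_pow_atTop_nhds_zero_of_forall_mem_spectrum_map (A : Matrix n n ℝ)
    (h : ∀ μ ∈ spectrum ℂ (A.map (fun x : ℝ => (x : ℂ))), ‖μ‖ < 1) :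
    Tendsto (fun k : ℕ => A ^ k) atTop (𝓝 0) := by
  have hc := (A.map (fun x : ℝ => (x : ℂ))).tendsto_pow_atTop_nhds_zero_of_forall_mem_spectrum h
  convert ((continuous_id.matrix_map Complex.continuous_re).tendsto 0).comp hc using 2 with k
  · have : (A.map fun x : ℝ => (x : ℂ)) ^ k = (A ^ k).map (↑) :=
      (map_pow Complex.ofRealHom.mapMatrix A k).symm
    ext i j
    simp [this]
  · simp

section DeleteRowCol

variable {i : n}

theorem charpoly_eq_X_sub_C_mul_charpoly_deleteRowCol [CommRing R] (A : Matrix n n R)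
    (hrow : ∀ j ≠ i, A i j = 0) :
    A.charpoly = (X - C (A i i)) * (A.deleteRowCol i).charpoly := by
  let e : {j // j = i} ⊕ {j // j ≠ i} ≃ n := Equiv.sumCompl (· = i)
  have hblocks : reindex e.symm e.symm A = fromBlocks (of fun _ _ => A i i) 0
      (of fun (a : {j // j ≠ i}) _ => A a i) (A.deleteRowCol i) := by
    ext (a | a) (b | b) <;> simp [e, a.2, b.2, hrow]
  have : Unique {j // j = i} := ⟨⟨⟨i, rfl⟩⟩, fun a => Subtype.ext a.2⟩
  rw [← charpoly_reindex e.symm, hblocks, charpoly_fromBlocks_zero₁₂]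
  simp [charpoly, det_unique, charmatrix_apply_eq]

theorem spectrum_deleteRowCol_subset {K : Type*} [Field K] (A : Matrix n n K)
    (hrow : ∀ j ≠ i, A i j = 0) : spectrum K (A.deleteRowCol i) ⊆ spectrum K A := by
  intro μ hμ
  rw [mem_spectrum_iff_isRoot_charpoly] at hμ ⊢
  rw [charpoly_eq_X_sub_C_mul_charpoly_deleteRowCol A hrow]
  exact root_mul.mpr (Or.inr hμ)

theorem notMem_spectrum_deleteRowCol {K : Type*} [Field K] (A : Matrix n n K)
    (hrow : ∀ j ≠ i, A i j = 0) (hsimple : A.charpoly.rootMultiplicity (A i i) = 1) :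
    A i i ∉ spectrum K (A.deleteRowCol i) := by
  rw [charpoly_eq_X_sub_C_mul_charpoly_deleteRowCol A hrow] at hsimple
  rw [mem_spectrum_iff_isRoot_charpoly]
  exact not_isRoot_of_rootMultiplicity_X_sub_C_mul_eq_one hsimple

variable [Semiring R] {A : Matrix n n R} {w : n → R}

theorem mulVec_apply_eq_zero_of_row (hrow : ∀ j ≠ i, A i j = 0) (hw : w i = 0) :
    (A *ᵥ w) i = 0 :=
  Finset.sum_eq_zero fun j _ => by
    by_cases hj : j = i
    · simp [hj, hw]
    · simp [hrow j hj]

theorem mulVec_comp_val_of_apply_eq_zero (hw : w i = 0) :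
    (A *ᵥ w) ∘ Subtype.val = A.deleteRowCol i *ᵥ (w ∘ Subtype.val) := by
  ext j
  simp [mulVec, dotProduct, Fintype.sum_eq_add_sum_subtype_ne _ i, hw]

theorem pow_mulVec_apply_eq_zero_and_comp_val (hrow : ∀ j ≠ i, A i j = 0) (hw : w i = 0)
    (k : ℕ) : (A ^ k *ᵥ w) i = 0 ∧
      (A ^ k *ᵥ w) ∘ Subtype.val = A.deleteRowCol i ^ k *ᵥ (w ∘ Subtype.val) := by
  induction k with
  | zero => simp [hw]
  | succ k ih =>
    rw [pow_succ', ← mulVec_mulVec, pow_succ', ← mulVec_mulVec, ← ih.2]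
    exact ⟨mulVec_apply_eq_zero_of_row hrow ih.1, mulVec_comp_val_of_apply_eq_zero ih.1⟩

end DeleteRowCol

theorem tendsto_pow_mulVec_of_apply_eq_zero [Semiring R] [TopologicalSpace R]
    [IsTopologicalSemiring R] {A : Matrix n n R} {i : n}
    (hrow : ∀ j ≠ i, A i j = 0) (hA : Tendsto (fun k : ℕ => A.deleteRowCol i ^ k) atTop (𝓝 0))
    {w : n → R} (hw : w i = 0) : Tendsto (fun k : ℕ => A ^ k *ᵥ w) atTop (𝓝 0) := by
  rw [tendsto_pi_nhds]
  intro j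
  by_cases hj : j = i
  · simp [hj, (pow_mulVec_apply_eq_zero_and_comp_val hrow hw _).1, tendsto_const_nhds]
  · have hQ : Tendsto (fun k => A.deleteRowCol i ^ k *ᵥ (w ∘ Subtype.val)) atTop (𝓝 0) := by
      simpa [Function.comp_def] using
        ((continuous_id.matrix_mulVec continuous_const).tendsto 0).comp hA
    refine (tendsto_pi_nhds.mp hQ ⟨j, hj⟩).congr fun k => ?_
    exact (congrFun (pow_mulVec_apply_eq_zero_and_comp_val hrow hw k).2 ⟨j, hj⟩).symm

theorem tendsto_pow_mulVec_nhds_apply_smul_one [CommRing R] [TopologicalSpace R]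
    [IsTopologicalRing R] {A : Matrix n n R} {i : n}
    (hrow : ∀ j ≠ i, A i j = 0) (hone : A *ᵥ (fun _ => 1) = fun _ => 1)
    (hA : Tendsto (fun k : ℕ => A.deleteRowCol i ^ k) atTop (𝓝 0)) (v : n → R) :
    Tendsto (fun k : ℕ => A ^ k *ᵥ v) atTop (𝓝 (v i • fun _ => 1)) := by
  have hw : (v - v i • fun _ => 1 : n → R) i = 0 := by simp
  simpa [mulVec_sub, mulVec_smul, pow_mulVec_eq_self hone] using
    (tendsto_pow_mulVec_of_apply_eq_zero hrow hA hw).add_const (v i • fun _ => (1 : R))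

end Matrix

open Matrix

theorem powers_tendsto_delta_general (ι : Type) [Fintype ι] [DecidableEq ι] (i0 : ι)
    (P : Matrix ι ι ℝ)
    (hones : P.mulVec (fun _ => 1) = fun _ => 1)
    (hrow : ∀ j : ι, P i0 j = if j = i0 then 1 else 0)
    (heig : ∀ lam : ℂ, lam ≠ 1 →
      (∃ v : ι → ℂ, v ≠ 0 ∧ (P.map (fun x : ℝ => (x : ℂ))).mulVec v = lam • v) →
      ‖lam‖ < 1)
    (hsimple : (P.charpoly).rootMultiplicity 1 = 1) :
    ∀ k : ι, Tendsto (fun j : ℕ => (P ^ j).mulVec (Pi.single k 1)) atTop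
      (nhds (((Pi.single k (1 : ℝ) : ι → ℝ) i0) • ((fun _ => 1) : ι → ℝ))) := by
  have hrow_ne : ∀ j ≠ i0, P i0 j = 0 := fun j hj => by simp [hrow, hj]
  set Pc := P.map (fun x : ℝ => (x : ℂ))
  have hrowc : ∀ j ≠ i0, Pc i0 j = 0 := fun j hj => by simp [Pc, hrow_ne j hj]
  have hsimplec : Pc.charpoly.rootMultiplicity (Pc i0 i0) = 1 := by
    have hχ : Pc.charpoly = P.charpoly.map Complex.ofRealHom := charpoly_map P Complex.ofRealHom
    have hPc : Pc i0 i0 = Complex.ofRealHom 1 := by simp [Pc, hrow]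
    rw [hχ, hPc, ← eq_rootMultiplicity_map Complex.ofReal_injective, hsimple]
  have hspec : ∀ μ ∈ spectrum ℂ (Pc.deleteRowCol i0), ‖μ‖ < 1 := by
    intro μ hμ
    have hμ1 : μ ≠ 1 := by
      rintro rfl
      exact Pc.notMem_spectrum_deleteRowCol hrowc hsimplec (by simpa [Pc, hrow] using hμ)
    obtain ⟨v, hv, hPv⟩ := exists_mulVec_eq_smul_of_mem_spectrum
      (spectrum_deleteRowCol_subset Pc hrowc hμ)
    exact heig μ hμ1 ⟨v, hv, hPv⟩
  exact fun k => tendsto_pow_mulVec_nhds_apply_smul_one hrow_ne hones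
    (tendsto_pow_atTop_nhds_zero_of_forall_mem_spectrum_map _ hspec) (Pi.single k 1)

/-- For a stochastic-type matrix `P̃` with `P̃𝟏 = 𝟏`, `δᵀP̃ = δᵀ`, row `0` equal to `δᵀ`,
all eigenvalues `λ ≠ 1` of modulus `< 1`, and `1` a simple eigenvalue, the powers applied
to the canonical basis vectors satisfy `P̃^j δ_k → δ_k(0)·𝟏`. -/
theorem powers_tendsto_delta (ι : Type) [Fintype ι] [DecidableEq ι] (i0 : ι)
    (P : Matrix ι ι ℝ)
    (hones : P.mulVec (fun _ => 1) = fun _ => 1)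
    (hdelta : Matrix.vecMul (Pi.single i0 1) P = Pi.single i0 1)
    (hrow : ∀ j : ι, P i0 j = if j = i0 then 1 else 0)
    (heig : ∀ lam : ℂ, lam ≠ 1 →
      (∃ v : ι → ℂ, v ≠ 0 ∧ (P.map (fun x : ℝ => (x : ℂ))).mulVec v = lam • v) →
      ‖lam‖ < 1)
    (hsimple : (P.charpoly).rootMultiplicity 1 = 1) :
    ∀ k : ι, Tendsto (fun j : ℕ => (P ^ j).mulVec (Pi.single k 1)) atTop
      (nhds (((Pi.single k (1 : ℝ) : ι → ℝ) i0) • ((fun _ => 1) : ι → ℝ))) :=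
  powers_tendsto_delta_general ι i0 P hones hrow heig hsimple
end

section
/- Let Φ = (φ_k)_{k∈ℤ} be a family of continuous compactly supported functions on ℝ with sup_k ‖φ_k‖_{L²} < ∞ and such that there exists s ∈ ℕ with: any point of ℝ lies in the supports of at most s of the φ_k. Then for every f ∈ L²(ℝ) and j ∈ ℤ, the sequence f_j(k) = 2^{j/2}∫_ℝ f(x)φ_k(2^j x)dx belongs to ℓ²(ℤ), with ‖f_j‖²_{ℓ²} ≤ s·‖f‖²_{L²}·sup_k‖φ_k‖²_{L²}. -/
/-!
By Cauchy–Schwarz, localized to the support of `φ_k(2^j ·)`, each coefficient satisfies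
`f_j(k)² ≤ 2^j ‖φ_k(2^j ·)‖²_{L²} ∫_{S_k} f² = ‖φ_k‖²_{L²} ∫_{S_k} f² ≤ M² ∫_{S_k} f²`, where
`S_k = 2^{-j} supp φ_k`. Since each point lies in at most `s` of the sets `S_k`, summing the
integrals over `k` counts `∫ f²` at most `s` times.
-/

open MeasureTheory

section CauchySchwarz

variable {α : Type*} [MeasurableSpace α] {μ : Measure α} {f g : α → ℝ}

theorem sq_integral_mul_le (hf : MemLp f 2 μ) (hg : MemLp g 2 μ) :
    (∫ x, f x * g x ∂μ) ^ 2 ≤ (∫ x, f x ^ 2 ∂μ) * ∫ x, g x ^ 2 ∂μ := by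
  have inner_toLp : ∀ {u v : α → ℝ} (hu : MemLp u 2 μ) (hv : MemLp v 2 μ),
      inner ℝ (hu.toLp u) (hv.toLp v) = ∫ x, u x * v x ∂μ := fun hu hv => by
    rw [L2.inner_def]
    refine integral_congr_ae ?_
    filter_upwards [hu.coeFn_toLp, hv.coeFn_toLp] with x hux hvx
    simp [hux, hvx, mul_comm]
  simpa only [inner_toLp, sq] using real_inner_mul_inner_self_le (hf.toLp f) (hg.toLp g)

theorem sq_integral_mul_le_setIntegral_sq_mul {s : Set α} (hs : MeasurableSet s)
    (hf : MemLp f 2 μ) (hg : MemLp g 2 μ) (hgs : ∀ x ∉ s, g x = 0) :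
    (∫ x, f x * g x ∂μ) ^ 2 ≤ (∫ x in s, f x ^ 2 ∂μ) * ∫ x, g x ^ 2 ∂μ := by
  have hfg : ∀ x, f x * g x = s.indicator f x * g x := fun x => by
    by_cases hx : x ∈ s <;> simp [hx, hgs]
  have hf2 : ∫ x in s, f x ^ 2 ∂μ = ∫ x, s.indicator f x ^ 2 ∂μ := by
    rw [← integral_indicator hs]
    congr 1 with x
    by_cases hx : x ∈ s <;> simp [hx]
  simpa only [hfg, hf2] using sq_integral_mul_le (hf.indicator hs) hg

end CauchySchwarz

theorem mul_sq_integral_mul_comp_mul_le {φ f : ℝ → ℝ} (hφ : Continuous φ)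
    (hφs : HasCompactSupport φ) (hf : MemLp f 2 volume) {c : ℝ} (hc : 0 < c) :
    c * (∫ x, f x * φ (c * x)) ^ 2
      ≤ (∫ x in (c * ·) ⁻¹' tsupport φ, f x ^ 2) * ∫ x, φ x ^ 2 := by
  have hmem : MemLp (fun x => φ (c * x)) 2 volume :=
    (hφ.comp (continuous_const_mul c)).memLp_of_hasCompactSupport
      (hφs.comp_homeomorph (Homeomorph.mulLeft₀ c hc.ne'))
  have hS : MeasurableSet ((c * ·) ⁻¹' tsupport φ) :=
    ((isClosed_tsupport φ).preimage (continuous_const_mul c)).measurableSet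
  have hCS := sq_integral_mul_le_setIntegral_sq_mul hS hf hmem
    fun x hx => image_eq_zero_of_notMem_tsupport hx
  have hscale : ∫ x, φ (c * x) ^ 2 = c⁻¹ * ∫ x, φ x ^ 2 := by
    rw [Measure.integral_comp_mul_left (fun y => φ y ^ 2) c, abs_of_pos (inv_pos.2 hc),
      smul_eq_mul]
  calc c * (∫ x, f x * φ (c * x)) ^ 2
      ≤ c * ((∫ x in (c * ·) ⁻¹' tsupport φ, f x ^ 2) * (c⁻¹ * ∫ x, φ x ^ 2)) := by
        rw [← hscale]; gcongr
    _ = _ := by field_simp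

section BoundedOverlap

variable {α ι : Type*} {S : ι → Set α} {h : α → ℝ}

theorem sum_indicator_le_ncard_mul {x : α} (hfin : {i | x ∈ S i}.Finite) (hx : 0 ≤ h x)
    (F : Finset ι) : ∑ i ∈ F, (S i).indicator h x ≤ {i | x ∈ S i}.ncard * h x := by
  classical
  rw [Finset.sum_indicator_eq_sum_filter, Finset.sum_const, nsmul_eq_mul]
  gcongr
  rw [← Set.ncard_coe_finset]
  exact Set.ncard_le_ncard (fun i hi => (Finset.mem_filter.1 hi).2) hfin

variable [MeasurableSpace α] {μ : Measure α} {n : ℕ}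

theorem sum_setIntegral_le_of_ncard_le (hS : ∀ i, MeasurableSet (S i))
    (hfin : ∀ x, {i | x ∈ S i}.Finite) (hcard : ∀ x, {i | x ∈ S i}.ncard ≤ n) (hh : 0 ≤ h)
    (hint : Integrable h μ) (F : Finset ι) :
    ∑ i ∈ F, ∫ x in S i, h x ∂μ ≤ n * ∫ x, h x ∂μ := by
  simp_rw [← integral_indicator (hS _)]
  rw [← integral_finsetSum F fun i _ => hint.indicator (hS i), ← integral_const_mul]
  refine integral_mono (integrable_finsetSum F fun i _ => hint.indicator (hS i))
    (hint.const_mul _) fun x => ?_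
  calc ∑ i ∈ F, (S i).indicator h x ≤ {i | x ∈ S i}.ncard * h x :=
        sum_indicator_le_ncard_mul (hfin x) (hh x) F
    _ ≤ n * h x := by gcongr; exacts [hh x, hcard x]

theorem summable_setIntegral_and_tsum_le_of_ncard_le (hS : ∀ i, MeasurableSet (S i))
    (hfin : ∀ x, {i | x ∈ S i}.Finite) (hcard : ∀ x, {i | x ∈ S i}.ncard ≤ n) (hh : 0 ≤ h)
    (hint : Integrable h μ) :
    Summable (fun i => ∫ x in S i, h x ∂μ) ∧ ∑' i, ∫ x in S i, h x ∂μ ≤ n * ∫ x, h x ∂μ := by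
  have hsum := sum_setIntegral_le_of_ncard_le hS hfin hcard hh hint
  have hsummable : Summable fun i => ∫ x in S i, h x ∂μ :=
    summable_of_sum_le (fun _ => setIntegral_nonneg (hS _) fun x _ => hh x) hsum
  exact ⟨hsummable, hsummable.tsum_le_of_sum_le hsum⟩

end BoundedOverlap

theorem rpow_intCast_div_two_sq {x : ℝ} (hx : 0 ≤ x) (j : ℤ) :
    (x ^ ((j : ℝ) / 2)) ^ 2 = x ^ j := by
  rw [← Real.rpow_mul_natCast hx, ← Real.rpow_intCast]
  norm_num

theorem scaled_inner_products_l2_general (φ : ℤ → ℝ → ℝ)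
    (hcont : ∀ k, Continuous (φ k)) (hsupp : ∀ k, HasCompactSupport (φ k))
    (M : ℝ) (hMbound : ∀ k : ℤ, (∫ x : ℝ, (φ k x) ^ 2) ≤ M ^ 2)
    (s : ℕ)
    (hlocfin : ∀ x : ℝ, {k : ℤ | x ∈ tsupport (φ k)}.Finite)
    (hloc : ∀ x : ℝ, {k : ℤ | x ∈ tsupport (φ k)}.ncard ≤ s)
    (f : ℝ → ℝ) (hf : MeasureTheory.MemLp f 2 MeasureTheory.volume) (j : ℤ) :
    Summable (fun k : ℤ =>
      ((2 : ℝ) ^ ((j : ℝ) / 2) * ∫ x : ℝ, f x * φ k ((2 : ℝ) ^ j * x)) ^ 2)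
    ∧ (∑' k : ℤ, ((2 : ℝ) ^ ((j : ℝ) / 2) * ∫ x : ℝ, f x * φ k ((2 : ℝ) ^ j * x)) ^ 2)
        ≤ (s : ℝ) * (∫ x : ℝ, (f x) ^ 2) * M ^ 2 := by
  set c : ℝ := (2 : ℝ) ^ j
  have hc : 0 < c := zpow_pos two_pos j
  set S : ℤ → Set ℝ := fun k => (c * ·) ⁻¹' tsupport (φ k)
  have hS : ∀ k, MeasurableSet (S k) := fun k =>
    ((isClosed_tsupport (φ k)).preimage (continuous_const_mul c)).measurableSet
  have hterm : ∀ k, ((2 : ℝ) ^ ((j : ℝ) / 2) * ∫ x, f x * φ k (c * x)) ^ 2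
      ≤ M ^ 2 * ∫ x in S k, f x ^ 2 := fun k => by
    rw [mul_pow, rpow_intCast_div_two_sq zero_le_two, mul_comm (M ^ 2)]
    refine (mul_sq_integral_mul_comp_mul_le (hcont k) (hsupp k) hf hc).trans ?_
    gcongr
    exact hMbound k
  obtain ⟨hmass, hmass_le⟩ := summable_setIntegral_and_tsum_le_of_ncard_le hS
    (fun x => hlocfin (c * x)) (fun x => hloc (c * x)) (fun x => sq_nonneg (f x))
    hf.integrable_sq
  have hdom := hmass.mul_left (M ^ 2)
  have hsummable := Summable.of_nonneg_of_le (fun k => sq_nonneg _) hterm hdom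
  refine ⟨hsummable, ?_⟩
  calc _ ≤ ∑' k, M ^ 2 * ∫ x in S k, f x ^ 2 := hsummable.tsum_le_tsum hterm hdom
    _ = M ^ 2 * ∑' k, ∫ x in S k, f x ^ 2 := tsum_mul_left
    _ ≤ M ^ 2 * (s * ∫ x, f x ^ 2) := by gcongr
    _ = s * (∫ x, f x ^ 2) * M ^ 2 := by ring

/-- For a strictly local, uniformly `L²`-bounded family `Φ`, the sequence of scaled
inner products `f_j(k) = 2^{j/2} ∫ f(x) φ_k(2^j x) dx` is square-summable with
`‖f_j‖²_{ℓ²} ≤ s ‖f‖²_{L²} sup_k ‖φ_k‖²_{L²}`. -/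
theorem scaled_inner_products_l2 (φ : ℤ → ℝ → ℝ)
    (hcont : ∀ k, Continuous (φ k)) (hsupp : ∀ k, HasCompactSupport (φ k))
    (M : ℝ) (hM : 0 ≤ M) (hMbound : ∀ k : ℤ, (∫ x : ℝ, (φ k x) ^ 2) ≤ M ^ 2)
    (s : ℕ)
    (hlocfin : ∀ x : ℝ, {k : ℤ | x ∈ tsupport (φ k)}.Finite)
    (hloc : ∀ x : ℝ, {k : ℤ | x ∈ tsupport (φ k)}.ncard ≤ s)
    (f : ℝ → ℝ) (hf : MeasureTheory.MemLp f 2 MeasureTheory.volume) (j : ℤ) :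
    Summable (fun k : ℤ =>
      ((2 : ℝ) ^ ((j : ℝ) / 2) * ∫ x : ℝ, f x * φ k ((2 : ℝ) ^ j * x)) ^ 2)
    ∧ (∑' k : ℤ, ((2 : ℝ) ^ ((j : ℝ) / 2) * ∫ x : ℝ, f x * φ k ((2 : ℝ) ^ j * x)) ^ 2)
        ≤ (s : ℝ) * (∫ x : ℝ, (f x) ^ 2) * M ^ 2 :=
  scaled_inner_products_l2_general φ hcont hsupp M hMbound s hlocfin hloc f hf j
end
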